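/- Let F₁ be a long-tailed distribution on [0,∞), let a > 1, and define a distribution F₀ by F̄₀(x) = F̄₁(x) for x < x₁ and, for each i ≥ 1, F̄₀(x) = F̄₁(xᵢ) for xᵢ ≤ x < yᵢ and F̄₀(x) = F̄₁(x) for yᵢ ≤ x < x_{i+1}, where xᵢ < yᵢ < x_{i+1}, F̄₁(xᵢ) = a F̄₁(yᵢ), yᵢ - xᵢ → ∞, and x_{i+1} - yᵢ → ∞. Then F̄₁(x) ≤ F̄₀(x) ≤ a F̄₁(x) for all x, and F₀ is not long-tailed, since limsup_{x→∞} F̄₀(x-1)/F̄₀(x) ≥ a > 1. -/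

import Mathlib

open MeasureTheory Filter Set Asymptotics

/-- The tail `F̄(x) = μ((x,∞))` of a distribution `μ` on `ℝ`. -/
noncomputable def tail (μ : MeasureTheory.Measure ℝ) (x : ℝ) : ℝ := (μ (Set.Ioi x)).toReal

/-- Convolution of two distributions on `ℝ`. -/
noncomputable def mconv (μ ν : MeasureTheory.Measure ℝ) : MeasureTheory.Measure ℝ :=
  MeasureTheory.Measure.map (fun p : ℝ × ℝ => p.1 + p.2) (μ.prod ν)

/-- `iconv μ k` is the `k`-fold convolution `μ^{*k}` (with `μ^{*0} = δ₀`). -/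
noncomputable def iconv (μ : MeasureTheory.Measure ℝ) : ℕ → MeasureTheory.Measure ℝ
  | 0 => MeasureTheory.Measure.dirac 0
  | n + 1 => mconv (iconv μ n) μ

/-- The class `L(γ)`: `F̄(x-t) ~ e^{γt} F̄(x)` as `x → ∞`, for every `t`. -/
def MemL (γ : ℝ) (μ : MeasureTheory.Measure ℝ) : Prop :=
  ∀ t : ℝ, Filter.Tendsto (fun x => tail μ (x - t) / tail μ x) Filter.atTop
    (nhds (Real.exp (γ * t)))

/-- The class `OS`: `limsup_{x→∞} (F*F)̄(x) / F̄(x) < ∞`. -/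
def MemOS (μ : MeasureTheory.Measure ℝ) : Prop :=
  Filter.IsBoundedUnder (· ≤ ·) Filter.atTop (fun x => tail (mconv μ μ) x / tail μ x)

/-!
On `[x i, y i)` the tail of `F₀` is frozen at `F̄₁(x i) = a F̄₁(y i)`, and elsewhere it equals
`F̄₁`; monotonicity of `F̄₁` then gives `F̄₁ ≤ F̄₀ ≤ a F̄₁`. Once `y i - x i ≥ 1`, the point `y i`
has `F̄₀(y i - 1) / F̄₀(y i) = F̄₁(x i) / F̄₁(y i) = a`, so this ratio is at least `a` arbitrarily
far out, while the sandwich keeps it bounded by `a F̄₁(z - 1) / F̄₁(z) → a`.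
-/

lemma tail_nonneg (μ : Measure ℝ) (z : ℝ) : 0 ≤ tail μ z := ENNReal.toReal_nonneg

lemma tail_antitone (μ : Measure ℝ) [IsFiniteMeasure μ] : Antitone (tail μ) :=
  fun _ _ huv => ENNReal.toReal_mono (measure_ne_top μ _) (measure_mono (Ioi_subset_Ioi huv))

lemma exists_le_and_lt_succ {α : Type*} [LinearOrder α] {u : ℕ → α} {z : α} (h0 : u 0 ≤ z)
    (h : ∃ n, z < u n) : ∃ n, u n ≤ z ∧ z < u (n + 1) := by
  by_contra! H
  obtain ⟨n, hn⟩ := h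
  exact (Nat.rec h0 (fun k hk => H k hk) n : u n ≤ z).not_gt hn

-- Past a zero of `f`, every ratio `f (z - t) / f z` is the junk value `f (z - t) / 0 = 0`.
lemma pos_of_tendsto_ratio {f : ℝ → ℝ} (hf : Antitone f) (hf0 : ∀ z, 0 ≤ f z) {t c : ℝ}
    (hc : c ≠ 0) (h : Tendsto (fun z => f (z - t) / f z) atTop (nhds c)) (z : ℝ) : 0 < f z := by
  by_contra! hz
  have hzero : (fun u => f (u - t) / f u) =ᶠ[atTop] fun _ => (0 : ℝ) := by
    filter_upwards [eventually_ge_atTop z] with u hu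
    rw [le_antisymm ((hf hu).trans hz) (hf0 u), div_zero]
  exact hc (tendsto_nhds_unique (h.congr' hzero) tendsto_const_nhds)

lemma isBoundedUnder_ratio_of_sandwich {f g : ℝ → ℝ} {a t c : ℝ} (hg : ∀ z, 0 < g z)
    (hfg : ∀ z, g z ≤ f z ∧ f z ≤ a * g z)
    (hL : Tendsto (fun z => g (z - t) / g z) atTop (nhds c)) :
    IsBoundedUnder (· ≤ ·) atTop (fun z => f (z - t) / f z) := by
  refine ((hL.const_mul a).isBoundedUnder_le).mono_le (Eventually.of_forall fun z => ?_)
  calc f (z - t) / f z ≤ a * g (z - t) / g z :=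
        div_le_div₀ ((hg _).le.trans ((hfg _).1.trans (hfg _).2)) (hfg _).2 (hg z) (hfg z).1
    _ = a * (g (z - t) / g z) := mul_div_assoc _ _ _

def Interlaced (x y : ℕ → ℝ) : Prop := ∀ i : ℕ, 1 ≤ i → x i < y i ∧ y i < x (i + 1)

namespace Interlaced

variable {x y : ℕ → ℝ}

lemma monotone_succ (h : Interlaced x y) : Monotone fun n => x (n + 1) :=
  monotone_nat_of_le_succ fun n => ((h (n + 1) (Nat.le_add_left 1 n)).1.trans
    (h (n + 1) (Nat.le_add_left 1 n)).2).le

lemma le_apply_of_one_le (h : Interlaced x y) {i : ℕ} (hi : 1 ≤ i) : x 1 ≤ x i := by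
  simpa [Nat.sub_add_cancel hi] using h.monotone_succ (Nat.zero_le (i - 1))

lemma tendsto_atTop (h : Interlaced x y) (hgap : Tendsto (fun i => y i - x i) atTop atTop) :
    Tendsto y atTop atTop := by
  refine Filter.tendsto_atTop.2 fun b => ?_
  filter_upwards [eventually_ge_atTop 1, hgap.eventually_ge_atTop (b - x 1)] with i hi hgi
  linarith [h.le_apply_of_one_le hi]

lemma exists_mem_Ico (h : Interlaced x y) (hgap : Tendsto (fun i => y i - x i) atTop atTop)
    {z : ℝ} (hz : x 1 ≤ z) : ∃ i, 1 ≤ i ∧ x i ≤ z ∧ z < x (i + 1) := by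
  have hunbdd : ∃ n, z < x (n + 1) := by
    obtain ⟨i, hi, hyi⟩ :=
      ((eventually_ge_atTop 1).and ((h.tendsto_atTop hgap).eventually_ge_atTop z)).exists
    exact ⟨i, hyi.trans_lt (h i hi).2⟩
  obtain ⟨n, hn⟩ := exists_le_and_lt_succ (u := fun n => x (n + 1)) hz hunbdd
  exact ⟨n + 1, Nat.le_add_left 1 n, hn⟩

variable {G₁ G₀ : ℝ → ℝ} {a : ℝ}

lemma sandwich (h : Interlaced x y) (hgap : Tendsto (fun i => y i - x i) atTop atTop)
    (hG₁ : Antitone G₁) (hG₁0 : ∀ z, 0 ≤ G₁ z) (ha : 1 ≤ a)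
    (hratio : ∀ i, 1 ≤ i → G₁ (x i) = a * G₁ (y i))
    (ht0 : ∀ z, z < x 1 → G₀ z = G₁ z)
    (ht1 : ∀ i, 1 ≤ i → ∀ z, x i ≤ z → z < y i → G₀ z = G₁ (x i))
    (ht2 : ∀ i, 1 ≤ i → ∀ z, y i ≤ z → z < x (i + 1) → G₀ z = G₁ z) (z : ℝ) :
    G₁ z ≤ G₀ z ∧ G₀ z ≤ a * G₁ z := by
  have hself : G₁ z ≤ G₁ z ∧ G₁ z ≤ a * G₁ z := ⟨le_rfl, le_mul_of_one_le_left (hG₁0 z) ha⟩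
  rcases lt_or_ge z (x 1) with hz | hz
  · rwa [ht0 z hz]
  obtain ⟨i, hi, hxz, hzx⟩ := h.exists_mem_Ico hgap hz
  rcases lt_or_ge z (y i) with hzy | hyz
  · rw [ht1 i hi z hxz hzy, hratio i hi]
    exact ⟨hratio i hi ▸ hG₁ hxz,
      mul_le_mul_of_nonneg_left (hG₁ hzy.le) (zero_le_one.trans ha)⟩
  · rwa [ht2 i hi z hyz hzx]

lemma frequently_le_ratio (h : Interlaced x y)
    (hgap : Tendsto (fun i => y i - x i) atTop atTop) (hG₁ : ∀ i, 1 ≤ i → G₁ (y i) ≠ 0)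
    (hratio : ∀ i, 1 ≤ i → G₁ (x i) = a * G₁ (y i))
    (ht1 : ∀ i, 1 ≤ i → ∀ z, x i ≤ z → z < y i → G₀ z = G₁ (x i))
    (ht2 : ∀ i, 1 ≤ i → ∀ z, y i ≤ z → z < x (i + 1) → G₀ z = G₁ z) :
    ∃ᶠ z in atTop, a ≤ G₀ (z - 1) / G₀ z := by
  have hjump : ∀ᶠ i in atTop, a ≤ G₀ (y i - 1) / G₀ (y i) := by
    filter_upwards [eventually_ge_atTop 1, hgap.eventually_ge_atTop 1] with i hi hgi
    rw [ht1 i hi _ (by linarith) (by linarith), ht2 i hi _ le_rfl (h i hi).2, hratio i hi,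
      mul_div_cancel_right₀ _ (hG₁ i hi)]
  exact (h.tendsto_atTop hgap).frequently hjump.frequently

end Interlaced

theorem stmt18_general (F1 F0 : Measure ℝ) [IsProbabilityMeasure F1]
    (hL1 : ∀ t > (0 : ℝ),
      Filter.Tendsto (fun x => tail F1 (x - t) / tail F1 x) Filter.atTop (nhds 1))
    (a : ℝ) (ha : 1 < a) (x y : ℕ → ℝ)
    (hxy : ∀ i : ℕ, 1 ≤ i → x i < y i ∧ y i < x (i + 1))
    (hratio : ∀ i : ℕ, 1 ≤ i → tail F1 (x i) = a * tail F1 (y i))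
    (hgap1 : Filter.Tendsto (fun i => y i - x i) Filter.atTop Filter.atTop)
    (ht0 : ∀ z : ℝ, z < x 1 → tail F0 z = tail F1 z)
    (ht1 : ∀ i : ℕ, 1 ≤ i → ∀ z : ℝ, x i ≤ z → z < y i → tail F0 z = tail F1 (x i))
    (ht2 : ∀ i : ℕ, 1 ≤ i → ∀ z : ℝ, y i ≤ z → z < x (i + 1) → tail F0 z = tail F1 z) :
    (∀ z : ℝ, tail F1 z ≤ tail F0 z ∧ tail F0 z ≤ a * tail F1 z) ∧
    (¬ ∀ t > (0 : ℝ),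
      Filter.Tendsto (fun z => tail F0 (z - t) / tail F0 z) Filter.atTop (nhds 1)) ∧
    a ≤ Filter.limsup (fun z => tail F0 (z - 1) / tail F0 z) Filter.atTop := by
  have hinter : Interlaced x y := hxy
  have hpos : ∀ z, 0 < tail F1 z :=
    pos_of_tendsto_ratio (tail_antitone F1) (tail_nonneg F1) one_ne_zero (hL1 1 one_pos)
  have hsandwich : ∀ z, tail F1 z ≤ tail F0 z ∧ tail F0 z ≤ a * tail F1 z :=
    hinter.sandwich hgap1 (tail_antitone F1) (tail_nonneg F1) ha.le hratio ht0 ht1 ht2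
  have hlimsup : a ≤ limsup (fun z => tail F0 (z - 1) / tail F0 z) atTop :=
    le_limsup_of_frequently_le
      (hinter.frequently_le_ratio hgap1 (fun i _ => (hpos (y i)).ne') hratio ht1 ht2)
      (isBoundedUnder_ratio_of_sandwich hpos hsandwich (hL1 1 one_pos))
  refine ⟨hsandwich, fun hL0 => ?_, hlimsup⟩
  rw [(hL0 1 one_pos).limsup_eq] at hlimsup
  linarith

theorem stmt18 (F1 F0 : Measure ℝ) [IsProbabilityMeasure F1] [IsProbabilityMeasure F0]
    (hs1 : F1 (Set.Iio 0) = 0)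
    (hL1 : ∀ t > (0 : ℝ),
      Filter.Tendsto (fun x => tail F1 (x - t) / tail F1 x) Filter.atTop (nhds 1))
    (a : ℝ) (ha : 1 < a) (x y : ℕ → ℝ)
    (hxy : ∀ i : ℕ, 1 ≤ i → x i < y i ∧ y i < x (i + 1))
    (hratio : ∀ i : ℕ, 1 ≤ i → tail F1 (x i) = a * tail F1 (y i))
    (hgap1 : Filter.Tendsto (fun i => y i - x i) Filter.atTop Filter.atTop)
    (hgap2 : Filter.Tendsto (fun i => x (i + 1) - y i) Filter.atTop Filter.atTop)
    (ht0 : ∀ z : ℝ, z < x 1 → tail F0 z = tail F1 z)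
    (ht1 : ∀ i : ℕ, 1 ≤ i → ∀ z : ℝ, x i ≤ z → z < y i → tail F0 z = tail F1 (x i))
    (ht2 : ∀ i : ℕ, 1 ≤ i → ∀ z : ℝ, y i ≤ z → z < x (i + 1) → tail F0 z = tail F1 z) :
    (∀ z : ℝ, tail F1 z ≤ tail F0 z ∧ tail F0 z ≤ a * tail F1 z) ∧
    (¬ ∀ t > (0 : ℝ),
      Filter.Tendsto (fun z => tail F0 (z - t) / tail F0 z) Filter.atTop (nhds 1)) ∧
    a ≤ Filter.limsup (fun z => tail F0 (z - 1) / tail F0 z) Filter.atTop :=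
  stmt18_general F1 F0 hL1 a ha x y hxy hratio hgap1 ht0 ht1 ht2
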